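/- Let 0 = e_0 < e_1 < ... < e_n = 1 determine a partition of [0,1] into n intervals, with midpoints r_i = (e_{i-1}+e_i)/2 and widths w_i = e_i - e_{i-1}. Let a_1,...,a_n and b_1,...,b_n be real numbers with |a_i| ≤ b_i for every i. Then there exists a probability vector π = (π_1,...,π_n) (π_i ≥ 0, ∑_i π_i = 1) such that for every y ∈ [0,1], ∑_{i=1}^n π_i ( a_i (y - r_i) - b_i w_i ) ≤ 0. -/
import Mathlib

/-- The weighted sum function. -/
noncomputable def Gfun (n : ℕ) (e a b π : ℕ → ℝ) (t : ℝ) : ℝ :=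
  ∑ i ∈ Finset.Icc 1 n, π i *
    (a i * (t - (e (i - 1) + e i) / 2) - b i * (e i - e (i - 1)))

lemma Gfun_affine (n : ℕ) (e a b π : ℕ → ℝ) (t : ℝ) :
    Gfun n e a b π t = (∑ i ∈ Finset.Icc 1 n, π i * a i) * t + Gfun n e a b π 0 := by
  unfold Gfun
  rw [Finset.sum_mul, ← Finset.sum_add_distrib]
  exact Finset.sum_congr rfl fun i _ => by ring

lemma Gfun_combo (n : ℕ) (e a b π σ : ℕ → ℝ) (l m : ℝ) (t : ℝ) :
    Gfun n e a b (fun i => l * π i + m * σ i) t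
      = l * Gfun n e a b π t + m * Gfun n e a b σ t := by
  unfold Gfun
  rw [Finset.mul_sum, Finset.mul_sum, ← Finset.sum_add_distrib]
  exact Finset.sum_congr rfl fun i _ => by ring

lemma Gfun_single (n : ℕ) (e a b : ℕ → ℝ) (k : ℕ) (hk : k ∈ Finset.Icc 1 n) (t : ℝ) :
    Gfun n e a b (fun i => if i = k then 1 else 0) t
      = a k * (t - (e (k - 1) + e k) / 2) - b k * (e k - e (k - 1)) := by
  unfold Gfun
  rw [Finset.sum_eq_single k (fun i _ hne => by simp [hne]) (fun h => absurd hk h)]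
  simp

lemma delta_sum (n : ℕ) (k : ℕ) (hk : k ∈ Finset.Icc 1 n) :
    (∑ i ∈ Finset.Icc 1 n, (if i = k then (1:ℝ) else 0)) = 1 := by
  rw [Finset.sum_eq_single k (fun i _ hne => by simp [hne]) (fun h => absurd hk h)]
  simp

lemma delta_slope (n : ℕ) (a : ℕ → ℝ) (k : ℕ) (hk : k ∈ Finset.Icc 1 n) :
    (∑ i ∈ Finset.Icc 1 n, (if i = k then (1:ℝ) else 0) * a i) = a k := by
  rw [Finset.sum_eq_single k (fun i _ hne => by simp [hne]) (fun h => absurd hk h)]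
  simp

lemma e_lt (n : ℕ) (e : ℕ → ℝ) (hmono : ∀ i < n, e i < e (i + 1)) :
    ∀ j ≤ n, ∀ i < j, e i < e j := by
  intro j
  induction j with
  | zero => intro _ i hi; omega
  | succ j ih =>
    intro hj i hi
    rcases Nat.lt_succ_iff_lt_or_eq.mp hi with h | h
    · exact (ih (by omega) i h).trans (hmono j (by omega))
    · subst h; exact hmono i (by omega)

lemma weighted_feasibility_aux
    (n : ℕ) (e a b : ℕ → ℝ)
    (hen : e n = 1)
    (hmono : ∀ i < n, e i < e (i + 1))
    (hab : ∀ i, 1 ≤ i → i ≤ n → |a i| ≤ b i) :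
    ∀ m k : ℕ, k = n - m → 1 ≤ k →
      ∃ π : ℕ → ℝ, (∀ i, 0 ≤ π i) ∧ (∑ i ∈ Finset.Icc 1 n, π i) = 1 ∧
        Gfun n e a b π (e (k - 1)) ≤ 0 ∧ Gfun n e a b π 1 ≤ 0 := by
  have key : ∀ k, 1 ≤ k → k ≤ n → ∀ t, e (k - 1) ≤ t → t ≤ e k →
      a k * (t - (e (k - 1) + e k) / 2) - b k * (e k - e (k - 1)) ≤ 0 := by
    intro k hk1 hkn t ht1 ht2
    have hw : e (k - 1) < e k := by
      have := hmono (k - 1) (by omega)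
      have hkk : k - 1 + 1 = k := by omega
      rwa [hkk] at this
    have hb : 0 ≤ b k := (abs_nonneg _).trans (hab k hk1 hkn)
    have h1 : a k * (t - (e (k - 1) + e k) / 2)
        ≤ |a k| * |t - (e (k - 1) + e k) / 2| := by
      rw [← abs_mul]; exact le_abs_self _
    have h2 : |t - (e (k - 1) + e k) / 2| ≤ (e k - e (k - 1)) / 2 :=
      abs_le.mpr ⟨by linarith, by linarith⟩
    have h3 : |a k| * |t - (e (k - 1) + e k) / 2| ≤ b k * ((e k - e (k - 1)) / 2) :=
      mul_le_mul (hab k hk1 hkn) h2 (abs_nonneg _) hb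
    nlinarith
  intro m
  induction m with
  | zero =>
    intro k hk hk1
    have hkn : k = n := by omega
    subst hkn
    have hmem : k ∈ Finset.Icc 1 k := Finset.mem_Icc.mpr ⟨hk1, le_rfl⟩
    refine ⟨fun i => if i = k then 1 else 0, fun i => by positivity,
      delta_sum k k hmem, ?_, ?_⟩
    · rw [Gfun_single k e a b k hmem]
      have hw : e (k - 1) < e k := by
        have := hmono (k - 1) (by omega)
        have hkk : k - 1 + 1 = k := by omega
        rwa [hkk] at this
      exact key k hk1 le_rfl (e (k - 1)) le_rfl hw.le
    · rw [Gfun_single k e a b k hmem, ← hen]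
      have hw : e (k - 1) < e k := by
        have := hmono (k - 1) (by omega)
        have hkk : k - 1 + 1 = k := by omega
        rwa [hkk] at this
      exact key k hk1 le_rfl (e k) hw.le le_rfl
  | succ m ih =>
    intro k hk hk1
    have hkn : k + 1 ≤ n := by omega
    obtain ⟨π', hpos', hsum', hleft', h1'⟩ := ih (k + 1) (by omega) (by omega)
    have hk1eq : k + 1 - 1 = k := by omega
    rw [hk1eq] at hleft'
    have hmem : k ∈ Finset.Icc 1 n := Finset.mem_Icc.mpr ⟨hk1, by omega⟩
    have hw : e (k - 1) < e k := by
      have := hmono (k - 1) (by omega)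
      have hkk : k - 1 + 1 = k := by omega
      rwa [hkk] at this
    by_cases hc1 : Gfun n e a b π' (e (k - 1)) ≤ 0
    · exact ⟨π', hpos', hsum', hc1, h1'⟩
    · push_neg at hc1
      by_cases hc2 : Gfun n e a b (fun i => if i = k then 1 else 0) 1 ≤ 0
      · refine ⟨fun i => if i = k then 1 else 0, fun i => by positivity,
          delta_sum n k hmem, ?_, hc2⟩
        rw [Gfun_single n e a b k hmem]
        exact key k hk1 (by omega) (e (k - 1)) le_rfl hw.le
      · push_neg at hc2
        -- slope of π' is negative, a k is positive
        set s' := ∑ i ∈ Finset.Icc 1 n, π' i * a i with hs'def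
        have haff1 := Gfun_affine n e a b π' (e (k - 1))
        have haff2 := Gfun_affine n e a b π' (e k)
        have hs'neg : s' < 0 := by nlinarith [hleft', hc1, hw]
        have hekn : e k < 1 := by
          rw [← hen]; exact e_lt n e hmono n le_rfl k (by omega)
        have hGδek : Gfun n e a b (fun i => if i = k then 1 else 0) (e k) ≤ 0 := by
          rw [Gfun_single n e a b k hmem]
          exact key k hk1 (by omega) (e k) hw.le le_rfl
        have hak : 0 < a k := by
          rw [Gfun_single n e a b k hmem] at hc2 hGδek
          nlinarith
        have hden : 0 < a k - s' := by linarith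
        set l := -s' / (a k - s') with hldef
        have hl0 : 0 ≤ l := div_nonneg (by linarith) hden.le
        have hl1 : l ≤ 1 := by rw [hldef, div_le_one hden]; linarith
        refine ⟨fun i => l * (if i = k then 1 else 0) + (1 - l) * π' i,
          fun i => add_nonneg (mul_nonneg hl0 (by positivity))
            (mul_nonneg (by linarith) (hpos' i)), ?_, ?_, ?_⟩
        · rw [Finset.sum_add_distrib, ← Finset.mul_sum, ← Finset.mul_sum,
            delta_sum n k hmem, hsum']
          ring
        all_goals {
          have hcombo := Gfun_combo n e a b (fun i => if i = k then 1 else 0) π' l (1 - l)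
          have hslope : (∑ i ∈ Finset.Icc 1 n,
              (l * (if i = k then 1 else 0) + (1 - l) * π' i) * a i) = 0 := by
            have : (∑ i ∈ Finset.Icc 1 n,
                (l * (if i = k then 1 else 0) + (1 - l) * π' i) * a i)
                = l * (∑ i ∈ Finset.Icc 1 n, (if i = k then (1:ℝ) else 0) * a i)
                  + (1 - l) * s' := by
              rw [Finset.mul_sum, Finset.mul_sum, ← Finset.sum_add_distrib]
              exact Finset.sum_congr rfl fun i _ => by ring
            rw [this, delta_slope n a k hmem, hldef]
            field_simp
            ring
          have hvalek : Gfun n e a b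
              (fun i => l * (if i = k then 1 else 0) + (1 - l) * π' i) (e k) ≤ 0 := by
            rw [hcombo (e k)]
            have t1 := mul_nonpos_of_nonneg_of_nonpos hl0 hGδek
            have t2 := mul_nonpos_of_nonneg_of_nonpos (by linarith : (0:ℝ) ≤ 1 - l) hleft'
            linarith
          have hconst : ∀ t, Gfun n e a b
              (fun i => l * (if i = k then 1 else 0) + (1 - l) * π' i) t
              = Gfun n e a b
                (fun i => l * (if i = k then 1 else 0) + (1 - l) * π' i) (e k) := by
            intro t
            rw [Gfun_affine n e a b _ t, Gfun_affine n e a b _ (e k), hslope]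
            ring
          rw [hconst]
          exact hvalek
        }

theorem weighted_feasibility
    (n : ℕ) (hn : 1 ≤ n) (e : ℕ → ℝ)
    (he0 : e 0 = 0) (hen : e n = 1)
    (hmono : ∀ i < n, e i < e (i + 1))
    (a b : ℕ → ℝ)
    (hab : ∀ i, 1 ≤ i → i ≤ n → |a i| ≤ b i) :
    ∃ π : ℕ → ℝ,
      (∀ i, 1 ≤ i → i ≤ n → 0 ≤ π i) ∧
      (∑ i ∈ Finset.Icc 1 n, π i) = 1 ∧
      ∀ y ∈ Set.Icc (0 : ℝ) 1,
        (∑ i ∈ Finset.Icc 1 n, π i *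
          (a i * (y - (e (i - 1) + e i) / 2) - b i * (e i - e (i - 1)))) ≤ 0 := by
  obtain ⟨π, hpos, hsum, h0, h1⟩ :=
    weighted_feasibility_aux n e a b hen hmono hab (n - 1) 1 (by omega) le_rfl
  refine ⟨π, fun i _ _ => hpos i, hsum, ?_⟩
  intro y hy
  have h0' : Gfun n e a b π 0 ≤ 0 := by
    have : (1 : ℕ) - 1 = 0 := rfl
    rw [this, he0] at h0
    exact h0
  show Gfun n e a b π y ≤ 0
  rw [Gfun_affine n e a b π y]
  rw [Gfun_affine n e a b π 1] at h1
  obtain ⟨hy0, hy1⟩ := hy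
  nlinarith [h0', h1, hy0, hy1]
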